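/- Let x, y ∈ PSL(2,ℂ) be elements of infinite order, and let A, B ∈ SL(2,ℂ) be matrix representatives of x and y respectively. Then x and y commute in PSL(2,ℂ) if and only if A and B have exactly the same eigenvectors; that is, if and only if for every nonzero v ∈ ℂ², v is an eigenvector of A exactly when v is an eigenvector of B. -/

import Mathlib

/-!
An element of infinite order of `PSL(2, ℂ)` lifts to a non-scalar matrix, and two such lifts `A`,
`B` commute in `PSL(2, ℂ)` only if they commute in `SL(2, ℂ)`: `B * A = -(A * B)` would force
`trace A = 0`, hence `A * A = -1`.

For `M = !![a, b; c, d]` a nonzero `v = (t, u)` is an eigenvector iff it is a zero of the binary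
quadratic form `c t² + (d - a) t u - b u²`, whose zeros are the fixed points of the Möbius map of
`M`. The entries of the commutator `M * N - N * M` are, up to sign, those of the cross product of
the coefficient vectors of the two forms. So non-scalar `M` and `N` commute iff their forms are
proportional, and over an algebraically closed field two nonzero binary quadratic forms are
proportional iff they have the same zeros.
-/

/-- `SL(2,ℂ)`: 2×2 complex matrices of determinant 1. -/
abbrev SL2C := Matrix.SpecialLinearGroup (Fin 2) ℂ

/-- `PSL(2,ℂ)`: the quotient of `SL(2,ℂ)` by its center `{I, -I}`. -/
abbrev PSL2C := SL2C ⧸ Subgroup.center SL2C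

/-- A nonzero vector `v ∈ ℂ²` is an eigenvector of `A ∈ SL(2,ℂ)`. -/
def IsEigenvectorSL2C (A : SL2C) (v : Fin 2 → ℂ) : Prop :=
  ∃ c : ℂ, Matrix.mulVec (A : Matrix (Fin 2) (Fin 2) ℂ) v = c • v

open Matrix MatrixGroups

section

variable {K : Type*} [Field K]

lemma exists_eq_smul_iff_det_eq_zero {v : Fin 2 → K} (hv : v ≠ 0) (w : Fin 2 → K) :
    (∃ c : K, w = c • v) ↔ v 0 * w 1 - v 1 * w 0 = 0 := by
  refine ⟨fun ⟨c, hc⟩ => by simp only [hc, Pi.smul_apply, smul_eq_mul]; ring, fun h => ?_⟩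
  by_cases h0 : v 0 = 0
  · have h1 : v 1 ≠ 0 := fun h1 => hv (funext fun i => by fin_cases i <;> assumption)
    refine ⟨w 1 / v 1, funext fun i => ?_⟩
    fin_cases i <;> simp only [Fin.zero_eta, Fin.mk_one, Pi.smul_apply, smul_eq_mul] <;> field_simp
    linear_combination -h
  · refine ⟨w 0 / v 0, funext fun i => ?_⟩
    fin_cases i <;> simp only [Fin.zero_eta, Fin.mk_one, Pi.smul_apply, smul_eq_mul] <;> field_simp
    linear_combination h

def fixedPointCoeffs (M : Matrix (Fin 2) (Fin 2) K) : Fin 3 → K :=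
  ![M 1 0, M 1 1 - M 0 0, -M 0 1]

def veronese (v : Fin 2 → K) : Fin 3 → K :=
  ![v 0 ^ 2, v 0 * v 1, v 1 ^ 2]

@[simp]
lemma dotProduct_veronese (p : Fin 3 → K) (t u : K) :
    p ⬝ᵥ veronese ![t, u] = p 0 * t ^ 2 + p 1 * (t * u) + p 2 * u ^ 2 := by
  rw [vec3_dotProduct]
  simp [veronese]

lemma fixedPointCoeffs_dotProduct_veronese (M : Matrix (Fin 2) (Fin 2) K) (v : Fin 2 → K) :
    fixedPointCoeffs M ⬝ᵥ veronese v = v 0 * (M *ᵥ v) 1 - v 1 * (M *ᵥ v) 0 := by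
  rw [vec3_dotProduct]
  simp only [fixedPointCoeffs, veronese, mulVec, dotProduct, Fin.sum_univ_two, cons_val]
  ring

lemma exists_mulVec_eq_smul_iff (M : Matrix (Fin 2) (Fin 2) K) {v : Fin 2 → K} (hv : v ≠ 0) :
    (∃ c : K, M *ᵥ v = c • v) ↔ fixedPointCoeffs M ⬝ᵥ veronese v = 0 := by
  rw [fixedPointCoeffs_dotProduct_veronese, exists_eq_smul_iff_det_eq_zero hv]

lemma dotProduct_eq_zero_of_cross_eq_zero {p q w : Fin 3 → K} (hpq : p ⨯₃ q = 0)
    (hp : p ≠ 0) (hw : p ⬝ᵥ w = 0) : q ⬝ᵥ w = 0 := by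
  have := cross_cross_eq_smul_sub_smul' w p q
  rw [hpq, map_zero, hw, zero_smul, sub_zero, eq_comm, smul_eq_zero, dotProduct_comm] at this
  exact this.resolve_right hp

lemma commutator_eq_fixedPointCoeffs_cross (M N : Matrix (Fin 2) (Fin 2) K) :
    M * N - N * M =
      let r := fixedPointCoeffs M ⨯₃ fixedPointCoeffs N
      !![-r 1, r 0; -r 2, r 1] := by
  ext i j
  fin_cases i <;> fin_cases j <;>
    simp only [Fin.zero_eta, Fin.mk_one, fixedPointCoeffs, cross_apply, Matrix.sub_apply, mul_apply,
      Fin.sum_univ_two, of_apply, cons_val] <;>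
    ring

lemma commute_iff_fixedPointCoeffs_cross_eq_zero (M N : Matrix (Fin 2) (Fin 2) K) :
    Commute M N ↔ fixedPointCoeffs M ⨯₃ fixedPointCoeffs N = 0 := by
  rw [commute_iff_eq, ← sub_eq_zero, commutator_eq_fixedPointCoeffs_cross]
  refine ⟨fun h => ?_, fun h => by simp [h, ← Matrix.ext_iff, Fin.forall_fin_two]⟩
  ext i
  fin_cases i
  · simpa using congr_fun₂ h 0 1
  · simpa using congr_fun₂ h 1 1
  · simpa using congr_fun₂ h 1 0

lemma cross_eq_zero_of_head_eq_zero {p q : Fin 3 → K} (hp : p ≠ 0) (hp0 : p 0 = 0)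
    (h : ∀ v : Fin 2 → K, v ≠ 0 → (p ⬝ᵥ veronese v = 0 ↔ q ⬝ᵥ veronese v = 0)) :
    p ⨯₃ q = 0 := by
  have hq0 : q 0 = 0 := by simpa using (h ![1, 0] (by simp)).1 (by simp [hp0])
  suffices hD : p 1 * q 2 - p 2 * q 1 = 0 by
    ext i; fin_cases i <;> simp [cross_apply, hp0, hq0, hD]
  -- `![p 2, -p 1]` and `![q 2, -q 1]` are the zeros of `p` and `q` other than `![1, 0]`.
  have hpD : p 1 * (p 1 * q 2 - p 2 * q 1) = 0 := by
    have hv : ![p 2, -p 1] ≠ 0 := by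
      contrapose! hp; ext i; fin_cases i <;> simp_all [funext_iff, Fin.forall_fin_succ]
    have := (h _ hv).1 (by simp [hp0]; ring)
    rw [dotProduct_veronese] at this
    linear_combination this - p 2 ^ 2 * hq0
  have hqD : q 1 * (p 1 * q 2 - p 2 * q 1) = 0 := by
    by_cases hq1 : q 1 = 0
    · simp [hq1]
    have := (h ![q 2, -q 1] (by simp [hq1])).2 (by simp [hq0]; ring)
    rw [dotProduct_veronese] at this
    linear_combination -this + q 2 ^ 2 * hp0
  by_contra hD
  have hp1 := (mul_eq_zero.1 hpD).resolve_right hD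
  have hq1 := (mul_eq_zero.1 hqD).resolve_right hD
  exact hD (by rw [hp1, hq1]; ring)

lemma exists_coeffs_eq_of_dotProduct_veronese_eq_zero {p : Fin 3 → K} (hp0 : p 0 ≠ 0) {r : K}
    (hr : p ⬝ᵥ veronese ![r, 1] = 0) : ∃ s, p 1 = -p 0 * (r + s) ∧ p 2 = p 0 * (r * s) := by
  rw [dotProduct_veronese] at hr
  refine ⟨-p 1 / p 0 - r, ?_, ?_⟩ <;> field_simp
  · ring
  · linear_combination hr

lemma cross_eq_zero_of_head_ne_zero {p q : Fin 3 → K} (hp0 : p 0 ≠ 0) {r : K}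
    (hr : p ⬝ᵥ veronese ![r, 1] = 0)
    (h : ∀ v : Fin 2 → K, v ≠ 0 → (p ⬝ᵥ veronese v = 0 ↔ q ⬝ᵥ veronese v = 0)) :
    p ⨯₃ q = 0 := by
  have hq0 : q 0 ≠ 0 := fun hq0 => hp0 (by simpa using (h ![1, 0] (by simp)).2 (by simp [hq0]))
  obtain ⟨s, hp1, hp2⟩ := exists_coeffs_eq_of_dotProduct_veronese_eq_zero hp0 hr
  obtain ⟨s', hq1, hq2⟩ :=
    exists_coeffs_eq_of_dotProduct_veronese_eq_zero hq0 ((h _ (by simp)).1 hr)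
  have hpt (t : K) : p ⬝ᵥ veronese ![t, 1] = p 0 * ((t - r) * (t - s)) := by
    rw [dotProduct_veronese, hp1, hp2]; ring
  have hqt (t : K) : q ⬝ᵥ veronese ![t, 1] = q 0 * ((t - r) * (t - s')) := by
    rw [dotProduct_veronese, hq1, hq2]; ring
  -- the second roots `s` of `p` and `s'` of `q` are roots of both, which forces `s = s'`
  have hs : (s - r) * (s - s') = 0 := by
    simpa [hqt, hq0] using (h ![s, 1] (by simp)).1 (by simp [hpt])
  have hs' : (s' - r) * (s' - s) = 0 := by
    simpa [hpt, hp0] using (h ![s', 1] (by simp)).2 (by simp [hqt])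
  obtain rfl : s = s' := by
    by_contra hne
    have h1 := (mul_eq_zero.1 hs).resolve_right (sub_ne_zero.2 hne)
    have h2 := (mul_eq_zero.1 hs').resolve_right (sub_ne_zero.2 (Ne.symm hne))
    exact hne (by linear_combination h1 - h2)
  calc p ⨯₃ q = ![0, 0, 0] := by
        rw [cross_apply, hp1, hp2, hq1, hq2]
        exact vec3_eq (by ring) (by ring) (by ring)
    _ = 0 := by simp

lemma exists_dotProduct_veronese_eq_zero [IsAlgClosed K] {p : Fin 3 → K} (hp0 : p 0 ≠ 0) :
    ∃ r, p ⬝ᵥ veronese ![r, 1] = 0 := by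
  open Polynomial in
  obtain ⟨r, hr⟩ := IsAlgClosed.exists_root (C (p 0) * X ^ 2 + C (p 1) * X + C (p 2))
    (by rw [degree_quadratic hp0]; decide)
  exact ⟨r, by simpa using hr⟩

lemma cross_eq_zero_of_forall_dotProduct_veronese_iff [IsAlgClosed K] {p q : Fin 3 → K}
    (hp : p ≠ 0)
    (h : ∀ v : Fin 2 → K, v ≠ 0 → (p ⬝ᵥ veronese v = 0 ↔ q ⬝ᵥ veronese v = 0)) :
    p ⨯₃ q = 0 := by
  by_cases hp0 : p 0 = 0
  · exact cross_eq_zero_of_head_eq_zero hp hp0 h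
  · obtain ⟨r, hr⟩ := exists_dotProduct_veronese_eq_zero hp0
    exact cross_eq_zero_of_head_ne_zero hp0 hr h

theorem commute_iff_forall_exists_mulVec_eq_smul_iff [IsAlgClosed K]
    {M N : Matrix (Fin 2) (Fin 2) K} (hM : fixedPointCoeffs M ≠ 0)
    (hN : fixedPointCoeffs N ≠ 0) :
    Commute M N ↔
      ∀ v : Fin 2 → K, v ≠ 0 →
        ((∃ c : K, M *ᵥ v = c • v) ↔ ∃ c : K, N *ᵥ v = c • v) := by
  rw [commute_iff_fixedPointCoeffs_cross_eq_zero]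
  refine ⟨fun h v hv => ?_, fun h => ?_⟩
  · rw [exists_mulVec_eq_smul_iff M hv, exists_mulVec_eq_smul_iff N hv]
    have h' : fixedPointCoeffs N ⨯₃ fixedPointCoeffs M = 0 := by
      rw [← cross_anticomm, h, neg_zero]
    exact ⟨dotProduct_eq_zero_of_cross_eq_zero h hM, dotProduct_eq_zero_of_cross_eq_zero h' hN⟩
  · refine cross_eq_zero_of_forall_dotProduct_veronese_iff hM fun v hv => ?_
    rw [← exists_mulVec_eq_smul_iff M hv, ← exists_mulVec_eq_smul_iff N hv]
    exact h v hv

lemma mul_self_eq_neg_one_of_trace_eq_zero {A : Matrix (Fin 2) (Fin 2) K} (htr : trace A = 0)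
    (hdet : A.det = 1) : A * A = -1 := by
  have := aeval_self_charpoly A
  rw [charpoly_fin_two, htr, hdet] at this
  simpa [sq, add_eq_zero_iff_eq_neg] using this

local notation:1024 "↑ₘ" A:1024 => ((A : SL(2, K)) : Matrix (Fin 2) (Fin 2) K)
local notation "PSL(2, " K ")" => SL(2, K) ⧸ Subgroup.center SL(2, K)

lemma mem_center_of_fixedPointCoeffs_eq_zero {A : SL(2, K)}
    (h : fixedPointCoeffs ↑ₘA = 0) : A ∈ Subgroup.center SL(2, K) := by
  have h10 : A 1 0 = 0 := congr_fun h 0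
  have h11 : A 1 1 = A 0 0 := sub_eq_zero.1 (congr_fun h 1)
  have h01 : A 0 1 = 0 := neg_eq_zero.1 (congr_fun h 2)
  have hA : scalar (Fin 2) (A 0 0) = A := by
    ext i j; fin_cases i <;> fin_cases j <;> simp [h10, h11, h01]
  refine Matrix.SpecialLinearGroup.mem_center_iff.2 ⟨A 0 0, ?_, hA⟩
  have hdet := A.det_coe
  rw [← hA] at hdet
  simpa using hdet

lemma fixedPointCoeffs_ne_zero_of_not_isOfFinOrder {A : SL(2, K)}
    (hA : ¬IsOfFinOrder (A : PSL(2, K))) : fixedPointCoeffs ↑ₘA ≠ 0 := fun h => hA <| by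
  rw [(QuotientGroup.eq_one_iff A).2 (mem_center_of_fixedPointCoeffs_eq_zero h)]
  exact IsOfFinOrder.one

variable [NeZero (2 : K)]

lemma trace_eq_zero_of_mul_eq_neg_mul {n : Type*} [Fintype n] [DecidableEq n]
    {A B : Matrix n n K} (hB : IsUnit B.det) (h : B * A = -(A * B)) : trace A = 0 := by
  have : trace A = -trace A := calc
    trace A = trace (B⁻¹ * (B * A)) := by
      rw [← Matrix.mul_assoc, nonsing_inv_mul B hB, Matrix.one_mul]
    _ = -trace (B * B⁻¹ * A) := by
      rw [h, Matrix.mul_neg, trace_neg, ← Matrix.mul_assoc, trace_mul_cycle]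
    _ = -trace A := by rw [mul_nonsing_inv B hB, Matrix.one_mul]
  have h2 : 2 * trace A = 0 := by linear_combination this
  exact (mul_eq_zero.1 h2).resolve_left two_ne_zero

lemma isOfFinOrder_mk_of_mul_eq_neg_mul {A B : SL(2, K)}
    (h : ↑ₘB * ↑ₘA = -(↑ₘA * ↑ₘB)) : IsOfFinOrder (A : PSL(2, K)) := by
  have hA2 : scalar (Fin 2) (-1 : K) = ↑ₘ(A * A) := by
    rw [Matrix.SpecialLinearGroup.coe_mul, mul_self_eq_neg_one_of_trace_eq_zero
      (trace_eq_zero_of_mul_eq_neg_mul (by simp) h) A.det_coe, map_neg, map_one]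
  refine isOfFinOrder_iff_pow_eq_one.2 ⟨2, two_pos, ?_⟩
  rw [sq, ← QuotientGroup.mk_mul, QuotientGroup.eq_one_iff]
  exact Matrix.SpecialLinearGroup.mem_center_iff.2 ⟨-1, by norm_num, hA2⟩

lemma commute_mk_iff_commute_coe {A B : SL(2, K)} (hA : ¬IsOfFinOrder (A : PSL(2, K))) :
    Commute (A : PSL(2, K)) B ↔ Commute ↑ₘA ↑ₘB := by
  refine ⟨fun h => ?_,
    fun h => (show Commute A B from Subtype.ext h.eq).map (QuotientGroup.mk' _)⟩
  have hz : (A * B)⁻¹ * (B * A) ∈ Subgroup.center SL(2, K) :=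
    QuotientGroup.eq.1 (by simpa only [QuotientGroup.mk_mul] using h.eq)
  obtain ⟨r, hr, hz⟩ := Matrix.SpecialLinearGroup.mem_center_iff.1 hz
  have hBA : ↑ₘB * ↑ₘA = r • (↑ₘA * ↑ₘB) := calc
    ↑ₘB * ↑ₘA = ↑ₘ(A * B) * ↑ₘ((A * B)⁻¹ * (B * A)) := by
      rw [← Matrix.SpecialLinearGroup.coe_mul, ← Matrix.SpecialLinearGroup.coe_mul,
        mul_inv_cancel_left]
    _ = r • (↑ₘA * ↑ₘB) := by
      rw [← hz, scalar_apply, smul_eq_mul_diagonal, Matrix.SpecialLinearGroup.coe_mul]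
  rcases (by simpa using hr : r = 1 ∨ r = -1) with rfl | rfl
  · simpa [commute_iff_eq, eq_comm] using hBA
  · exact absurd (isOfFinOrder_mk_of_mul_eq_neg_mul (by simpa using hBA)) hA

end

/-- Two elements of `PSL(2,ℂ)` of infinite order commute if and only if matrix
representatives in `SL(2,ℂ)` have exactly the same eigenvectors (equivalently, the
corresponding isometries of `ℍ³` have the same axis or the same parabolic fixed
point at infinity). -/
theorem commute_iff_same_eigenvectors (x y : PSL2C)
    (hx : ¬ IsOfFinOrder x) (hy : ¬ IsOfFinOrder y)
    (A B : SL2C)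
    (hA : (QuotientGroup.mk A : PSL2C) = x) (hB : (QuotientGroup.mk B : PSL2C) = y) :
    Commute x y ↔
      ∀ v : Fin 2 → ℂ, v ≠ 0 → (IsEigenvectorSL2C A v ↔ IsEigenvectorSL2C B v) := by
  subst hA hB
  rw [commute_mk_iff_commute_coe hx]
  exact commute_iff_forall_exists_mulVec_eq_smul_iff
    (fixedPointCoeffs_ne_zero_of_not_isOfFinOrder hx)
    (fixedPointCoeffs_ne_zero_of_not_isOfFinOrder hy)
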